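/- Let L : L^p(Ω,E,ℙ) → F be a continuous linear map with 1 ≤ p < ∞. If p = 1 or F = ℝ, then for every A ∈ F the operator norm of the restriction L_A of L to L^p(A,E,ℙ) equals its p-semivariation norm: ‖L_A‖_{p,ℙ} = ⦀L_A⦀_{p,ℙ}. -/

import Mathlib

/-!
Both suprema run over functions supported in `A`. For a disjoint step function
`Y = Σ 1_{A_i} x_i` the triangle inequality gives `‖L Y‖ ≤ Σ ‖L (1_{A_i} x_i)‖`, so by homogeneity
`‖L Y‖ ≤ ‖Y‖_p ⦀L_A⦀`; since `p < ∞`, step functions supported in `A` are dense among the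
`L^p` functions supported in `A`, whence `‖L_A‖ ≤ ⦀L_A⦀`.
Conversely, for `p = 1` the norm is additive over disjoint pieces, so
`Σ ‖L (1_{A_i} x_i)‖ ≤ ‖L_A‖ Σ ‖1_{A_i} x_i‖₁ = ‖L_A‖ ‖Y‖₁`; for `F = ℝ`, multiplying each `x_i`
by the sign of `L (1_{A_i} x_i)` does not increase `‖Y‖_p` and turns `L Y` into
`Σ |L (1_{A_i} x_i)|`.
-/

open MeasureTheory ENNReal Filter

noncomputable section

/-- The operator norm `‖L_A‖_{p,ℙ}` of the restriction of `L` to `L^p` functions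
supported in `A`. -/
def opNormOn {Ω E F : Type*} [MeasurableSpace Ω] (P : Measure Ω) [IsFiniteMeasure P]
    [NormedAddCommGroup E] [NormedSpace ℝ E] [NormedAddCommGroup F] [NormedSpace ℝ F]
    (p : ℝ≥0∞) [Fact (1 ≤ p)] (L : Lp E p P →L[ℝ] F) (A : Set Ω) : ℝ≥0∞ :=
  ⨆ (Y : Lp E p P) (_ : ‖Y‖ ≤ 1) (_ : ∀ᵐ ω ∂P, ω ∉ A → Y ω = 0), (‖L Y‖₊ : ℝ≥0∞)

/-- The `p`-semivariation norm `⦀L_A⦀_{p,ℙ}` of the restriction of `L` to `L^p`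
functions supported in `A`. -/
def opSemiVarOn {Ω E F : Type*} [MeasurableSpace Ω] (P : Measure Ω) [IsFiniteMeasure P]
    [NormedAddCommGroup E] [NormedSpace ℝ E] [NormedAddCommGroup F] [NormedSpace ℝ F]
    (p : ℝ≥0∞) [Fact (1 ≤ p)] (L : Lp E p P →L[ℝ] F) (A : Set Ω) : ℝ≥0∞ :=
  ⨆ (n : ℕ) (As : Fin n → Set Ω) (xs : Fin n → E) (hAs : ∀ i, MeasurableSet (As i))
    (_ : Pairwise (Function.onFun Disjoint As)) (_ : ∀ i, As i ⊆ A)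
    (_ : eLpNorm (fun ω => ∑ i, (As i).indicator (fun _ => xs i) ω) p P ≤ 1),
    ∑ i, (‖L (indicatorConstLp p (hAs i) (measure_ne_top P (As i)) (xs i))‖₊ : ℝ≥0∞)

section DisjointIndicators

variable {Ω ι : Type*} [Fintype ι] {As : ι → Set Ω}

theorem sum_indicator_apply_of_mem {M : Type*} [AddCommMonoid M]
    (hd : Pairwise (Function.onFun Disjoint As)) (x : ι → M) {ω : Ω} {j : ι} (hj : ω ∈ As j) :
    ∑ i, (As i).indicator (fun _ => x i) ω = x j := by
  rw [Finset.sum_eq_single j (fun i _ hij => Set.indicator_of_notMem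
    (Set.disjoint_right.mp (hd hij) hj) _) (by simp), Set.indicator_of_mem hj]

theorem enorm_sum_indicator_apply {E : Type*} [NormedAddCommGroup E]
    (hd : Pairwise (Function.onFun Disjoint As)) (x : ι → E) (ω : Ω) :
    ‖∑ i, (As i).indicator (fun _ => x i) ω‖ₑ = ∑ i, (As i).indicator (fun _ => ‖x i‖ₑ) ω := by
  by_cases h : ∃ j, ω ∈ As j
  · obtain ⟨j, hj⟩ := h
    rw [sum_indicator_apply_of_mem hd x hj, sum_indicator_apply_of_mem hd _ hj]
  · push Not at h
    simp [Set.indicator_of_notMem (h _)]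

end DisjointIndicators

theorem indicatorConstLp_smul {Ω E 𝕜 : Type*} [MeasurableSpace Ω] {μ : Measure Ω}
    [NormedAddCommGroup E] [NormedRing 𝕜] [Module 𝕜 E] [IsBoundedSMul 𝕜 E] {p : ℝ≥0∞}
    {s : Set Ω} (hs : MeasurableSet s) (hμs : μ s ≠ ∞) (c : 𝕜) (x : E) :
    indicatorConstLp p hs hμs (c • x) = c • indicatorConstLp p hs hμs x := by
  refine Lp.ext ?_
  filter_upwards [indicatorConstLp_coeFn (c := c • x),
    Lp.coeFn_smul c (indicatorConstLp p hs hμs x), indicatorConstLp_coeFn (c := x)] with ω h1 h2 h3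
  rw [h1, h2, Pi.smul_apply, h3, Set.indicator_const_smul_apply]

theorem enorm_apply_le_mul_of_forall_norm_le_one {V W 𝓕 : Type*} [NormedAddCommGroup V]
    [NormedSpace ℝ V] [NormedAddCommGroup W] [NormedSpace ℝ W] [FunLike 𝓕 V W]
    [LinearMapClass 𝓕 ℝ V W] (L : 𝓕) {Q : V → Prop} (hQ : ∀ (c : ℝ) v, Q v → Q (c • v))
    {K : ℝ≥0∞} (hK : ∀ v, Q v → ‖v‖ ≤ 1 → ‖L v‖ₑ ≤ K) {v : V} (hv : Q v) :
    ‖L v‖ₑ ≤ ‖v‖ₑ * K := by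
  rcases eq_or_ne v 0 with rfl | hv0
  · simp
  have hnorm : ‖v‖ ≠ 0 := norm_ne_zero_iff.2 hv0
  have hu : ‖‖v‖⁻¹ • v‖ ≤ 1 := by
    rw [norm_smul, norm_inv, norm_norm, inv_mul_cancel₀ hnorm]
  calc ‖L v‖ₑ = ‖‖v‖ • L (‖v‖⁻¹ • v)‖ₑ := by rw [← map_smul, smul_inv_smul₀ hnorm]
    _ = ‖v‖ₑ * ‖L (‖v‖⁻¹ • v)‖ₑ := by rw [enorm_smul, enorm_norm]
    _ ≤ ‖v‖ₑ * K := by gcongr; exact hK _ (hQ _ _ hv) hu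

theorem MeasureTheory.SimpleFunc.pairwise_disjoint_fiber_inter {Ω E : Type*} [MeasurableSpace Ω]
    (g : SimpleFunc Ω E) (A : Set Ω) :
    Pairwise (Function.onFun Disjoint fun x : g.range => g ⁻¹' {x.1} ∩ A) :=
  fun _ _ hxy => ((Set.disjoint_singleton.2 (Subtype.coe_ne_coe.2 hxy)).preimage g).mono
    Set.inter_subset_left Set.inter_subset_left

section StepFunctions

variable {Ω E : Type*} [MeasurableSpace Ω] [NormedAddCommGroup E] (p : ℝ≥0∞) (P : Measure Ω)
  [IsFiniteMeasure P] {ι : Type*} [Fintype ι]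

def stepLp (As : ι → Set Ω) (hAs : ∀ i, MeasurableSet (As i)) (x : ι → E) : Lp E p P :=
  ∑ i, indicatorConstLp p (hAs i) (measure_ne_top P (As i)) (x i)

variable {p P} {As : ι → Set Ω} (hAs : ∀ i, MeasurableSet (As i))

theorem coeFn_stepLp (x : ι → E) :
    stepLp p P As hAs x =ᵐ[P] fun ω => ∑ i, (As i).indicator (fun _ => x i) ω := by
  filter_upwards [Lp.coeFn_fun_finsetSum Finset.univ
      fun i => indicatorConstLp p (hAs i) (measure_ne_top P (As i)) (x i),
    ae_all_iff.2 fun i => indicatorConstLp_coeFn (hs := hAs i) (c := x i)] with ω h1 h2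
  rw [stepLp, h1]
  exact Finset.sum_congr rfl fun i _ => h2 i

theorem enorm_stepLp (x : ι → E) :
    ‖stepLp p P As hAs x‖ₑ = eLpNorm (fun ω => ∑ i, (As i).indicator (fun _ => x i) ω) p P := by
  rw [Lp.enorm_def, eLpNorm_congr_ae (coeFn_stepLp hAs x)]

theorem stepLp_smul [NormedSpace ℝ E] (c : ℝ) (x : ι → E) :
    stepLp p P As hAs (c • x) = c • stepLp p P As hAs x := by
  simp only [stepLp, Pi.smul_apply, indicatorConstLp_smul, Finset.smul_sum]

theorem enorm_stepLp_smul_le [NormedSpace ℝ E] (hd : Pairwise (Function.onFun Disjoint As))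
    (c : ι → ℝ) (hc : ∀ i, ‖c i‖ ≤ 1) (x : ι → E) :
    ‖stepLp p P As hAs (fun i => c i • x i)‖ₑ ≤ ‖stepLp p P As hAs x‖ₑ := by
  rw [enorm_stepLp, enorm_stepLp]
  refine eLpNorm_mono_enorm fun ω => ?_
  rw [enorm_sum_indicator_apply hd, enorm_sum_indicator_apply hd]
  refine Finset.sum_le_sum fun i _ => Set.indicator_le_indicator ?_
  rw [enorm_smul]
  exact mul_le_of_le_one_left' (by rw [← ofReal_norm]; exact ENNReal.ofReal_le_one.2 (hc i))

theorem ae_stepLp_eq_zero_of_notMem {A : Set Ω} (hsub : ∀ i, As i ⊆ A) (x : ι → E) :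
    ∀ᵐ ω ∂P, ω ∉ A → stepLp p P As hAs x ω = 0 := by
  filter_upwards [coeFn_stepLp hAs x] with ω h hω
  rw [h]
  exact Finset.sum_eq_zero fun i _ => Set.indicator_of_notMem (fun h => hω (hsub i h)) _

theorem ae_indicatorConstLp_eq_zero_of_notMem {A s : Set Ω} (hs : MeasurableSet s) (hsA : s ⊆ A)
    (x : E) : ∀ᵐ ω ∂P, ω ∉ A → indicatorConstLp p hs (measure_ne_top P s) x ω = 0 := by
  filter_upwards [indicatorConstLp_coeFn_notMem (p := p) (hs := hs) (c := x)] with ω h hω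
  exact h fun hωs => hω (hsA hωs)

theorem sum_enorm_indicatorConstLp_one (hd : Pairwise (Function.onFun Disjoint As)) (x : ι → E) :
    ∑ i, ‖indicatorConstLp 1 (hAs i) (measure_ne_top P (As i)) (x i)‖ₑ
      = eLpNorm (fun ω => ∑ i, (As i).indicator (fun _ => x i) ω) 1 P := by
  have hmeas : ∀ i, Measurable ((As i).indicator fun _ => ‖x i‖ₑ) :=
    fun i => measurable_const.indicator (hAs i)
  simp_rw [eLpNorm_one_eq_lintegral_enorm, enorm_sum_indicator_apply hd,
    lintegral_finsetSum _ fun i _ => hmeas i, Lp.enorm_def,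
    eLpNorm_congr_ae indicatorConstLp_coeFn, eLpNorm_one_eq_lintegral_enorm,
    enorm_indicator_eq_indicator_enorm]

theorem toLp_restrict_eq_stepLp {A : Set Ω} (g : SimpleFunc Ω E) (hA : MeasurableSet A) :
    ((g.restrict A).memLp_of_isFiniteMeasure p P).toLp
      = stepLp p P (fun x : g.range => g ⁻¹' {x.1} ∩ A)
          (fun x => (g.measurableSet_fiber x).inter hA) (fun x => x.1) := by
  refine Lp.ext ?_
  filter_upwards [MemLp.coeFn_toLp ((g.restrict A).memLp_of_isFiniteMeasure p P),
    coeFn_stepLp (p := p) (P := P) (fun x : g.range => (g.measurableSet_fiber x).inter hA)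
      (fun x => x.1)] with ω h1 h2
  rw [h1, h2, SimpleFunc.coe_restrict _ hA]
  by_cases hω : ω ∈ A
  · rw [Set.indicator_of_mem hω, sum_indicator_apply_of_mem (g.pairwise_disjoint_fiber_inter A) _
      (j := ⟨g ω, g.mem_range_self ω⟩) ⟨rfl, hω⟩]
  · simp [hω]

theorem mem_closure_range_toLp_restrict [Fact (1 ≤ p)] {A : Set Ω} (hp : p ≠ ∞) {Y : Lp E p P}
    (hY : ∀ᵐ ω ∂P, ω ∉ A → Y ω = 0) (hA : MeasurableSet A) :
    Y ∈ closure (Set.range fun g : SimpleFunc Ω E =>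
      ((g.restrict A).memLp_of_isFiniteMeasure p P).toLp) := by
  rw [EMetric.mem_closure_iff]
  intro ε hε
  obtain ⟨g, hg, -⟩ := (Lp.memLp Y).exists_simpleFunc_eLpNorm_sub_lt hp hε.ne'
  refine ⟨_, ⟨g, rfl⟩, ?_⟩
  have hdiff : ⇑Y - ⇑(((g.restrict A).memLp_of_isFiniteMeasure p P).toLp) =ᵐ[P]
      A.indicator (⇑Y - ⇑g) := by
    filter_upwards [hY, MemLp.coeFn_toLp ((g.restrict A).memLp_of_isFiniteMeasure p P)]
      with ω hYω hgω
    rw [Pi.sub_apply, hgω, SimpleFunc.coe_restrict _ hA]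
    by_cases hω : ω ∈ A <;> simp [hω, hYω]
  calc edist Y _ = eLpNorm (A.indicator (⇑Y - ⇑g)) p P := by
        rw [Lp.edist_def, eLpNorm_congr_ae hdiff]
    _ ≤ eLpNorm (⇑Y - ⇑g) p P := eLpNorm_indicator_le _
    _ < ε := hg

end StepFunctions

section Operator

variable {Ω E F : Type*} [MeasurableSpace Ω] {P : Measure Ω} [IsFiniteMeasure P]
  [NormedAddCommGroup E] [NormedSpace ℝ E] [NormedAddCommGroup F] [NormedSpace ℝ F]
  {p : ℝ≥0∞} [Fact (1 ≤ p)] {A : Set Ω}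

theorem enorm_apply_le_mul_opNormOn (L : Lp E p P →L[ℝ] F) {Y : Lp E p P}
    (hY : ∀ᵐ ω ∂P, ω ∉ A → Y ω = 0) : ‖L Y‖ₑ ≤ ‖Y‖ₑ * opNormOn P p L A := by
  refine enorm_apply_le_mul_of_forall_norm_le_one L
    (Q := fun Z : Lp E p P => ∀ᵐ ω ∂P, ω ∉ A → Z ω = 0) (fun c Z hZ => ?_)
    (fun Z hZ hZ1 => le_iSup₂_of_le Z hZ1 (le_iSup_of_le hZ le_rfl)) hY
  filter_upwards [hZ, Lp.coeFn_smul c Z] with ω h1 h2 hω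
  rw [h2, Pi.smul_apply, h1 hω, smul_zero]

theorem le_opSemiVarOn (L : Lp E p P →L[ℝ] F) {ι : Type*} [Fintype ι] {As : ι → Set Ω}
    (hAs : ∀ i, MeasurableSet (As i)) (hd : Pairwise (Function.onFun Disjoint As))
    (hsub : ∀ i, As i ⊆ A) (x : ι → E)
    (hx : eLpNorm (fun ω => ∑ i, (As i).indicator (fun _ => x i) ω) p P ≤ 1) :
    ∑ i, ‖L (indicatorConstLp p (hAs i) (measure_ne_top P (As i)) (x i))‖ₑ
      ≤ opSemiVarOn P p L A := by
  let e := (Fintype.equivFin ι).symm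
  have hx' : eLpNorm (fun ω => ∑ k, (As (e k)).indicator (fun _ => x (e k)) ω) p P ≤ 1 := by
    convert hx using 3 with ω
    exact e.sum_comp fun i => (As i).indicator (fun _ => x i) ω
  rw [← e.sum_comp]
  exact le_iSup_of_le (Fintype.card ι) <| le_iSup_of_le (As ∘ e) <| le_iSup_of_le (x ∘ e) <|
    le_iSup_of_le (fun i => hAs (e i)) <| le_iSup_of_le (hd.comp_of_injective e.injective) <|
    le_iSup_of_le (fun i => hsub (e i)) <| le_iSup_of_le hx' le_rfl

theorem enorm_apply_stepLp_le (L : Lp E p P →L[ℝ] F) {ι : Type*} [Fintype ι] {As : ι → Set Ω}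
    (hAs : ∀ i, MeasurableSet (As i)) (hd : Pairwise (Function.onFun Disjoint As))
    (hsub : ∀ i, As i ⊆ A) (x : ι → E) :
    ‖L (stepLp p P As hAs x)‖ₑ ≤ ‖stepLp p P As hAs x‖ₑ * opSemiVarOn P p L A := by
  refine enorm_apply_le_mul_of_forall_norm_le_one L (Q := fun Y => ∃ y, Y = stepLp p P As hAs y)
    (fun c _ ⟨y, hy⟩ => ⟨c • y, by rw [hy, stepLp_smul]⟩) ?_ ⟨x, rfl⟩
  rintro _ ⟨y, rfl⟩ hy
  have hy' : eLpNorm (fun ω => ∑ i, (As i).indicator (fun _ => y i) ω) p P ≤ 1 := by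
    rw [← enorm_stepLp hAs, ← ofReal_norm]
    exact ENNReal.ofReal_le_one.2 hy
  calc ‖L (stepLp p P As hAs y)‖ₑ
      ≤ ∑ i, ‖L (indicatorConstLp p (hAs i) (measure_ne_top P (As i)) (y i))‖ₑ := by
        rw [stepLp, map_sum]
        exact enorm_sum_le _ _
    _ ≤ opSemiVarOn P p L A := le_opSemiVarOn L hAs hd hsub y hy'

theorem opNormOn_le_opSemiVarOn (hp : p ≠ ∞) (L : Lp E p P →L[ℝ] F) (hA : MeasurableSet A) :
    opNormOn P p L A ≤ opSemiVarOn P p L A := by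
  set M := opSemiVarOn P p L A
  refine iSup_le fun Y => iSup₂_le fun hY1 hY => ?_
  rcases eq_or_ne M ⊤ with hM | hM
  · exact hM ▸ le_top
  have hclosed : IsClosed {Z : Lp E p P | ‖L Z‖ₑ ≤ ‖Z‖ₑ * M} :=
    isClosed_le (continuous_enorm.comp L.continuous)
      ((ENNReal.continuous_mul_const hM).comp continuous_enorm)
  have hsimple : Set.range (fun g : SimpleFunc Ω E =>
      ((g.restrict A).memLp_of_isFiniteMeasure p P).toLp) ⊆ {Z | ‖L Z‖ₑ ≤ ‖Z‖ₑ * M} := by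
    rintro _ ⟨g, rfl⟩
    dsimp only
    rw [toLp_restrict_eq_stepLp g hA]
    exact enorm_apply_stepLp_le L _ (g.pairwise_disjoint_fiber_inter A)
      (fun _ => Set.inter_subset_right) _
  calc ‖L Y‖ₑ ≤ ‖Y‖ₑ * M :=
        hclosed.closure_subset_iff.2 hsimple (mem_closure_range_toLp_restrict hp hY hA)
    _ ≤ 1 * M := by
        gcongr
        rw [← ofReal_norm]
        exact ENNReal.ofReal_le_one.2 hY1
    _ = M := one_mul M

theorem opSemiVarOn_le_opNormOn_of_one (L : Lp E 1 P →L[ℝ] F) :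
    opSemiVarOn P 1 L A ≤ opNormOn P 1 L A := by
  simp only [opSemiVarOn, iSup_le_iff]
  intro n As x hAs hd hsub hx
  calc ∑ i, ‖L (indicatorConstLp 1 (hAs i) (measure_ne_top P (As i)) (x i))‖ₑ
      ≤ ∑ i, ‖indicatorConstLp 1 (hAs i) (measure_ne_top P (As i)) (x i)‖ₑ * opNormOn P 1 L A :=
        Finset.sum_le_sum fun i _ => enorm_apply_le_mul_opNormOn L
          (ae_indicatorConstLp_eq_zero_of_notMem (hAs i) (hsub i) (x i))
    _ = eLpNorm (fun ω => ∑ i, (As i).indicator (fun _ => x i) ω) 1 P * opNormOn P 1 L A := by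
        rw [← Finset.sum_mul, sum_enorm_indicatorConstLp_one hAs hd]
    _ ≤ opNormOn P 1 L A := mul_le_of_le_one_left' hx

theorem opSemiVarOn_le_opNormOn_of_linearIsometryEquiv (e : F ≃ₗᵢ[ℝ] ℝ)
    (L : Lp E p P →L[ℝ] F) : opSemiVarOn P p L A ≤ opNormOn P p L A := by
  simp only [opSemiVarOn, iSup_le_iff]
  intro n As x hAs hd hsub hx
  set q := fun i => indicatorConstLp p (hAs i) (measure_ne_top P (As i)) (x i)
  set σ : Fin n → ℝ := fun i => SignType.sign (e (L (q i)))
  set Y := stepLp p P As hAs fun i => σ i • x i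
  have hY1 : ‖Y‖ ≤ 1 := by
    have hσ : ∀ i, ‖σ i‖ ≤ 1 := fun i => by
      rcases (SignType.sign (e (L (q i)))).trichotomy with h | h | h <;> simp [σ, h]
    have : ‖Y‖ₑ ≤ 1 :=
      (enorm_stepLp_smul_le hAs hd σ hσ x).trans (by rwa [enorm_stepLp hAs])
    rwa [← ofReal_norm, ENNReal.ofReal_le_one] at this
  have hLY : e (L Y) = ∑ i, ‖L (q i)‖ := by
    simp only [Y, stepLp, indicatorConstLp_smul, map_sum, map_smul, smul_eq_mul]
    refine Finset.sum_congr rfl fun i _ => ?_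
    show (SignType.sign (e (L (q i))) : ℝ) * e (L (q i)) = ‖L (q i)‖
    rw [sign_mul_self, ← Real.norm_eq_abs, e.norm_map]
  calc ∑ i, ‖L (q i)‖ₑ = ‖e (L Y)‖ₑ := by
        rw [hLY, Real.enorm_of_nonneg (Finset.sum_nonneg fun i _ => norm_nonneg _),
          ENNReal.ofReal_sum_of_nonneg fun i _ => norm_nonneg _]
        simp_rw [ofReal_norm]
    _ = ‖L Y‖ₑ := e.enorm_map (L Y)
    _ ≤ opNormOn P p L A :=
        le_iSup₂_of_le Y hY1 (le_iSup_of_le (ae_stepLp_eq_zero_of_notMem hAs hsub _) le_rfl)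

end Operator

/-- If `p = 1` or `F = ℝ` (as a normed space), then the operator norm of the restriction
of `L` to functions supported in `A` equals its `p`-semivariation norm. -/
theorem stmt5 {Ω E F : Type*} [MeasurableSpace Ω] (P : Measure Ω) [IsProbabilityMeasure P]
    [NormedAddCommGroup E] [NormedSpace ℝ E] [NormedAddCommGroup F] [NormedSpace ℝ F]
    (p : ℝ≥0∞) [Fact (1 ≤ p)] (hp' : p ≠ ∞)
    (L : Lp E p P →L[ℝ] F)
    (hcase : p = 1 ∨ Nonempty (F ≃ₗᵢ[ℝ] ℝ))
    (A : Set Ω) (hA : MeasurableSet A) :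
    opNormOn P p L A = opSemiVarOn P p L A := by
  refine le_antisymm (opNormOn_le_opSemiVarOn hp' L hA) ?_
  rcases hcase with rfl | ⟨⟨e⟩⟩
  · exact opSemiVarOn_le_opNormOn_of_one L
  · exact opSemiVarOn_le_opNormOn_of_linearIsometryEquiv e L
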